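/- arXiv:2601.23073 — 8 statements merged into one kernel-verified Lean document; each statement's English description precedes it below -/
import Mathlib

section
/- Every arrangement cell contains a permutation point p(π, φ) for some permutations π, φ of {1,…,n}; in particular, every arrangement cell is nonempty. -/
/-- An arrangement on `n` points: a pair of strict partial orders on `Fin n`
such that any two distinct indices are comparable in at least one of them. -/
def IsArrangement {n : ℕ} (rRe rIm : Fin n → Fin n → Prop) : Prop :=
  (∀ i, ¬ rRe i i) ∧ (∀ i j k, rRe i j → rRe j k → rRe i k) ∧
  (∀ i, ¬ rIm i i) ∧ (∀ i j k, rIm i j → rIm j k → rIm i k) ∧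
  (∀ i j, i ≠ j → rRe i j ∨ rRe j i ∨ rIm i j ∨ rIm j i)

/-- The arrangement cell attached to a pair of relations. -/
def cell {n : ℕ} (rRe rIm : Fin n → Fin n → Prop) : Set (Fin n → ℂ) :=
  {z | (∀ i j, rRe i j → (z i).re < (z j).re) ∧
       (∀ i j, rIm i j → (z i).im < (z j).im)}

/-- The permutation point `p(π, φ)`: `k`-th coordinate is `π(k) + φ(k)·i`,
where `π(k), φ(k)` take values in `{1, …, n}`. -/
noncomputable def permPoint {n : ℕ} (π φ : Equiv.Perm (Fin n)) : Fin n → ℂ :=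
  fun k => (((π k : ℕ) + 1 : ℝ) : ℂ) + (((φ k : ℕ) + 1 : ℝ) : ℂ) * Complex.I

/-! By Szpilrajn's theorem a strict partial order on `Fin n` extends to a linear order, i.e. it
is respected by some numbering `π : Fin n ≃ Fin n`. Numbering the points compatibly with `≺_Re`
for the real parts and with `≺_Im` for the imaginary parts puts `p(π, φ)` in the cell. -/

theorem exists_equiv_fin_of_isStrictOrder {α : Type*} [Fintype α] {k : ℕ}
    (hk : Fintype.card α = k) (r : α → α → Prop) [IsStrictOrder α r] :
    ∃ e : α ≃ Fin k, ∀ a b, r a b → e a < e b := by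
  let _ := partialOrderOfSO r
  let _ : Fintype (LinearExtension α) := ‹Fintype α›
  let e := (Fintype.orderIsoFinOfCardEq (LinearExtension α) hk).symm
  refine ⟨e.toEquiv, fun a b (hab : a < b) => e.strictMono ?_⟩
  exact (toLinearExtension.monotone hab.le).lt_of_ne hab.ne

theorem IsArrangement.isStrictOrder_re {n : ℕ} {rRe rIm : Fin n → Fin n → Prop}
    (h : IsArrangement rRe rIm) : IsStrictOrder (Fin n) rRe :=
  { irrefl := h.1, trans := h.2.1 }

theorem IsArrangement.isStrictOrder_im {n : ℕ} {rRe rIm : Fin n → Fin n → Prop}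
    (h : IsArrangement rRe rIm) : IsStrictOrder (Fin n) rIm :=
  { irrefl := h.2.2.1, trans := h.2.2.2.1 }

@[simp]
theorem permPoint_re {n : ℕ} (π φ : Equiv.Perm (Fin n)) (k : Fin n) :
    (permPoint π φ k).re = (π k : ℕ) + 1 := by
  simp [permPoint]

@[simp]
theorem permPoint_im {n : ℕ} (π φ : Equiv.Perm (Fin n)) (k : Fin n) :
    (permPoint π φ k).im = (φ k : ℕ) + 1 := by
  simp [permPoint]

theorem permPoint_mem_cell {n : ℕ} {rRe rIm : Fin n → Fin n → Prop} {π φ : Equiv.Perm (Fin n)}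
    (hπ : ∀ i j, rRe i j → π i < π j) (hφ : ∀ i j, rIm i j → φ i < φ j) :
    permPoint π φ ∈ cell rRe rIm :=
  ⟨fun i j hij => by simpa using hπ i j hij, fun i j hij => by simpa using hφ i j hij⟩

theorem arrangement_cell_contains_permPoint {n : ℕ} (rRe rIm : Fin n → Fin n → Prop)
    (h : IsArrangement rRe rIm) :
    ∃ π φ : Equiv.Perm (Fin n), permPoint π φ ∈ cell rRe rIm := by
  have := h.isStrictOrder_re
  have := h.isStrictOrder_im
  obtain ⟨π, hπ⟩ := exists_equiv_fin_of_isStrictOrder (Fintype.card_fin n) rRe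
  obtain ⟨φ, hφ⟩ := exists_equiv_fin_of_isStrictOrder (Fintype.card_fin n) rIm
  exact ⟨π, φ, permPoint_mem_cell hπ hφ⟩
end

section
/- The arrangement cells cover the ordered configuration space: for every z ∈ OC_n there exists an arrangement on n points whose attached cell contains z. -/
/-- The ordered configuration space of `n` points in `ℂ`. -/
def OC (n : ℕ) : Set (Fin n → ℂ) := {z | Function.Injective z}

theorem Complex.re_lt_or_re_lt_or_im_lt_or_im_lt_of_ne {z w : ℂ} (h : z ≠ w) :
    z.re < w.re ∨ w.re < z.re ∨ z.im < w.im ∨ w.im < z.im := by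
  rcases lt_trichotomy z.re w.re with hre | hre | hre
  · exact Or.inl hre
  · have him : z.im ≠ w.im := fun him => h (Complex.ext hre him)
    exact Or.inr (Or.inr him.lt_or_gt)
  · exact Or.inr (Or.inl hre)

theorem isArrangement_of_injective {n : ℕ} {z : Fin n → ℂ} (hz : Function.Injective z) :
    IsArrangement (fun i j => (z i).re < (z j).re) (fun i j => (z i).im < (z j).im) :=
  ⟨fun _ => lt_irrefl _, fun _ _ _ => lt_trans, fun _ => lt_irrefl _, fun _ _ _ => lt_trans,
    fun _ _ hij => Complex.re_lt_or_re_lt_or_im_lt_or_im_lt_of_ne (hz.ne hij)⟩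

theorem mem_cell_re_lt_im_lt {n : ℕ} (z : Fin n → ℂ) :
    z ∈ cell (fun i j => (z i).re < (z j).re) (fun i j => (z i).im < (z j).im) :=
  ⟨fun _ _ h => h, fun _ _ h => h⟩

theorem arrangement_cells_cover_OC {n : ℕ} (z : Fin n → ℂ) (hz : z ∈ OC n) :
    ∃ rRe rIm : Fin n → Fin n → Prop,
      IsArrangement rRe rIm ∧ z ∈ cell rRe rIm :=
  ⟨_, _, isArrangement_of_injective hz, mem_cell_re_lt_im_lt z⟩
end

section
/- If A and A' are arrangement cells whose intersection A ∩ A' is nonempty, then A ∩ A' is itself an arrangement cell: there exists an arrangement on n points whose attached cell equals A ∩ A'. -/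
open Relation

lemma TransGen.lt_of_forall_lt {α β : Type*} [Preorder β] {r : α → α → Prop} {f : α → β}
    (hf : ∀ i j, r i j → f i < f j) {i j : α} (hij : TransGen r i j) : f i < f j := by
  simpa [transGen_eq_self] using hij.lift f hf

section

variable {n : ℕ}

lemma cell_transGen (rRe rIm : Fin n → Fin n → Prop) :
    cell (TransGen rRe) (TransGen rIm) = cell rRe rIm := by
  ext z
  refine ⟨fun ⟨hRe, hIm⟩ => ⟨fun i j h => hRe i j (.single h), fun i j h => hIm i j (.single h)⟩,
    fun ⟨hRe, hIm⟩ => ⟨fun i j => TransGen.lt_of_forall_lt hRe,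
      fun i j => TransGen.lt_of_forall_lt hIm⟩⟩

lemma cell_sup (rRe rIm rRe' rIm' : Fin n → Fin n → Prop) :
    cell (rRe ⊔ rRe') (rIm ⊔ rIm') = cell rRe rIm ∩ cell rRe' rIm' := by
  ext z
  simp only [cell, Set.mem_ofPred_eq, Set.mem_inter_iff, Pi.sup_apply, sup_Prop_eq, or_imp,
    forall_and]
  tauto

lemma isArrangement_transGen {rRe rIm : Fin n → Fin n → Prop} (hne : (cell rRe rIm).Nonempty)
    (htot : ∀ i j, i ≠ j → rRe i j ∨ rRe j i ∨ rIm i j ∨ rIm j i) :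
    IsArrangement (TransGen rRe) (TransGen rIm) := by
  obtain ⟨z, hRe, hIm⟩ := cell_transGen rRe rIm ▸ hne
  refine ⟨fun i hi => (hRe i i hi).false, fun _ _ _ => TransGen.trans,
    fun i hi => (hIm i i hi).false, fun _ _ _ => TransGen.trans, fun i j hij => ?_⟩
  exact (htot i j hij).imp .single (.imp .single (.imp .single .single))

end

theorem arrangement_cell_inter_general {n : ℕ}
    (rRe rIm rRe' rIm' : Fin n → Fin n → Prop)
    (h : IsArrangement rRe rIm)
    (hne : (cell rRe rIm ∩ cell rRe' rIm').Nonempty) :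
    ∃ sRe sIm : Fin n → Fin n → Prop,
      IsArrangement sRe sIm ∧ cell sRe sIm = cell rRe rIm ∩ cell rRe' rIm' := by
  have htot : ∀ i j, i ≠ j →
      (rRe ⊔ rRe') i j ∨ (rRe ⊔ rRe') j i ∨ (rIm ⊔ rIm') i j ∨ (rIm ⊔ rIm') j i :=
    fun i j hij => (h.2.2.2.2 i j hij).imp .inl (.imp .inl (.imp .inl .inl))
  rw [← cell_sup] at hne ⊢
  exact ⟨_, _, isArrangement_transGen hne htot, cell_transGen _ _⟩

theorem arrangement_cell_inter {n : ℕ}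
    (rRe rIm rRe' rIm' : Fin n → Fin n → Prop)
    (h : IsArrangement rRe rIm) (h' : IsArrangement rRe' rIm')
    (hne : (cell rRe rIm ∩ cell rRe' rIm').Nonempty) :
    ∃ sRe sIm : Fin n → Fin n → Prop,
      IsArrangement sRe sIm ∧ cell sRe sIm = cell rRe rIm ∩ cell rRe' rIm' :=
  arrangement_cell_inter_general rRe rIm rRe' rIm' h hne
end

section
/- Let (≺_Re, ≺_Im) and (≺'_Re, ≺'_Im) be arrangements on n points whose attached cells A and A' satisfy A ∩ A' ≠ ∅. Then the union relation ≺_Re ∪ ≺'_Re is acyclic, i.e., its transitive closure is irreflexive; and likewise the transitive closure of ≺_Im ∪ ≺'_Im is irreflexive. -/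
theorem Relation.not_transGen_self_of_lt_onFun {α β : Type*} [Preorder β]
    {r : α → α → Prop} (f : α → β) (hr : ∀ a b, r a b → f a < f b) (a : α) :
    ¬ Relation.TransGen r a a := fun hcyc =>
  lt_irrefl (f a) (transGen_minimal (r' := fun a b => f a < f b) hr a a hcyc)

theorem Relation.not_transGen_or_self_of_lt_onFun {α β : Type*} [Preorder β]
    {r r' : α → α → Prop} (f : α → β) (hr : ∀ a b, r a b → f a < f b)
    (hr' : ∀ a b, r' a b → f a < f b) (a : α) :
    ¬ Relation.TransGen (fun a b => r a b ∨ r' a b) a a :=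
  not_transGen_self_of_lt_onFun f (fun a b hab => hab.elim (hr a b) (hr' a b)) a

theorem arrangement_union_acyclic_general {n : ℕ}
    (rRe rIm rRe' rIm' : Fin n → Fin n → Prop)
    (hne : (cell rRe rIm ∩ cell rRe' rIm').Nonempty) :
    (∀ i, ¬ Relation.TransGen (fun a b => rRe a b ∨ rRe' a b) i i) ∧
    (∀ i, ¬ Relation.TransGen (fun a b => rIm a b ∨ rIm' a b) i i) := by
  obtain ⟨z, ⟨hRe, hIm⟩, hRe', hIm'⟩ := hne
  exact ⟨Relation.not_transGen_or_self_of_lt_onFun (fun i => (z i).re) hRe hRe',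
    Relation.not_transGen_or_self_of_lt_onFun (fun i => (z i).im) hIm hIm'⟩

theorem arrangement_union_acyclic {n : ℕ}
    (rRe rIm rRe' rIm' : Fin n → Fin n → Prop)
    (h : IsArrangement rRe rIm) (h' : IsArrangement rRe' rIm')
    (hne : (cell rRe rIm ∩ cell rRe' rIm').Nonempty) :
    (∀ i, ¬ Relation.TransGen (fun a b => rRe a b ∨ rRe' a b) i i) ∧
    (∀ i, ¬ Relation.TransGen (fun a b => rIm a b ∨ rIm' a b) i i) :=
  arrangement_union_acyclic_general rRe rIm rRe' rIm' hne
end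

section
/- Every continuous path F : [0,1] → OC_n admits a finite covering sequence of arrangement cells: there exist arrangement cells A_1,…,A_r and a partition 0 = t_0 ≤ t_1 ≤ … ≤ t_r = 1 such that F([t_{i-1},t_i]) ⊆ A_i for every i. -/
/-
A configuration `z` with distinct points lies in the cell cut out by its own coordinate orders
`(z i).re < (z j).re` and `(z i).im < (z j).im`, which is an arrangement since distinct points differ
in a real or an imaginary part. Arrangement cells are open, so these cells form an open cover of the
image of the compact path, and a Lebesgue number for the cover yields the partition of `[0,1]`.
-/

open Set

theorem ContinuousOn.exists_partition_image_subset_open_cover {X ι : Type*} [TopologicalSpace X]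
    {F : ℝ → X} {a b : ℝ} (hab : a ≤ b) (hF : ContinuousOn F (Icc a b)) {U : ι → Set X}
    (hU : ∀ i, IsOpen (U i)) (hcover : F '' Icc a b ⊆ ⋃ i, U i) :
    ∃ (r : ℕ) (t : Fin (r + 1) → ℝ), Monotone t ∧ t 0 = a ∧ t (Fin.last r) = b ∧
      ∀ k : Fin r, ∃ i, F '' Icc (t k.castSucc) (t k.succ) ⊆ U i := by
  have hFr : Continuous ((Icc a b).domRestrict F) := continuousOn_iff_continuous_domRestrict.mp hF
  obtain ⟨t, ht0, hmono, ⟨m, hm⟩, hsub⟩ := exists_monotone_Icc_subset_open_cover_Icc hab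
    (fun i => (hU i).preimage hFr) fun u _ => by simpa using hcover ⟨u, u.2, rfl⟩
  refine ⟨m, fun k => t k, fun k l hkl => hmono (Fin.le_iff_val_le_val.mp hkl), by simp [ht0],
    by simp [hm m le_rfl], fun k => ?_⟩
  obtain ⟨i, hi⟩ := hsub k
  refine ⟨i, ?_⟩
  rintro _ ⟨u, hu, rfl⟩
  have hu_mem : u ∈ Icc a b := ⟨(t k).2.1.trans hu.1, hu.2.trans (t (k + 1)).2.2⟩
  exact hi (show (⟨u, hu_mem⟩ : Icc a b) ∈ Icc (t k) (t (k + 1)) from hu)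

theorem isOpen_setOf_forall_rel_lt {ι X : Type*} [Finite ι] [TopologicalSpace X]
    {f : ι → X → ℝ} (hf : ∀ i, Continuous (f i)) (r : ι → ι → Prop) :
    IsOpen {x | ∀ i j, r i j → f i x < f j x} := by
  classical
  simp_rw [ofPred_forall]
  refine isOpen_iInter_of_finite fun i => isOpen_iInter_of_finite fun j => ?_
  by_cases h : r i j <;> simp [h, isOpen_lt (hf i) (hf j)]

theorem isOpen_cell {n : ℕ} (rRe rIm : Fin n → Fin n → Prop) : IsOpen (cell rRe rIm) :=
  (isOpen_setOf_forall_rel_lt (fun i => Complex.continuous_re.comp (continuous_apply i)) rRe).inter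
    (isOpen_setOf_forall_rel_lt (fun i => Complex.continuous_im.comp (continuous_apply i)) rIm)

def reLt {n : ℕ} (z : Fin n → ℂ) (i j : Fin n) : Prop := (z i).re < (z j).re

def imLt {n : ℕ} (z : Fin n → ℂ) (i j : Fin n) : Prop := (z i).im < (z j).im

theorem isArrangement_reLt_imLt {n : ℕ} {z : Fin n → ℂ} (hz : Function.Injective z) :
    IsArrangement (reLt z) (imLt z) := by
  refine ⟨fun _ => lt_irrefl _, fun _ _ _ => lt_trans, fun _ => lt_irrefl _,
    fun _ _ _ => lt_trans, fun i j hij => ?_⟩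
  have hre_or_im : (z i).re ≠ (z j).re ∨ (z i).im ≠ (z j).im := by
    rw [← not_and_or, ← Complex.ext_iff]
    exact hz.ne hij
  unfold reLt imLt
  rcases hre_or_im with h | h <;> rcases h.lt_or_gt with h | h <;> simp [h]

theorem mem_cell_reLt_imLt {n : ℕ} (z : Fin n → ℂ) : z ∈ cell (reLt z) (imLt z) :=
  ⟨fun _ _ h => h, fun _ _ h => h⟩

theorem exists_finite_cover {n : ℕ} (F : ℝ → (Fin n → ℂ))
    (hFc : ContinuousOn F (Set.Icc 0 1))
    (hFoc : ∀ t ∈ Set.Icc (0:ℝ) 1, F t ∈ OC n) :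
    ∃ (r : ℕ) (rRe rIm : Fin r → Fin n → Fin n → Prop) (t : Fin (r + 1) → ℝ),
      (∀ i, IsArrangement (rRe i) (rIm i)) ∧
      Monotone t ∧ t 0 = 0 ∧ t (Fin.last r) = 1 ∧
      ∀ i : Fin r, F '' Set.Icc (t i.castSucc) (t i.succ) ⊆ cell (rRe i) (rIm i) := by
  have hcover : F '' Icc 0 1 ⊆ ⋃ z : OC n, cell (reLt z.1) (imLt z.1) := by
    rintro _ ⟨s, hs, rfl⟩
    exact mem_iUnion.mpr ⟨⟨F s, hFoc s hs⟩, mem_cell_reLt_imLt (F s)⟩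
  obtain ⟨r, t, hmono, ht0, ht1, hsub⟩ :=
    hFc.exists_partition_image_subset_open_cover zero_le_one (fun _ => isOpen_cell _ _) hcover
  choose z hz using hsub
  exact ⟨r, fun k => reLt (z k).1, fun k => imLt (z k).1, t,
    fun k => isArrangement_reLt_imLt (z k).2, hmono, ht0, ht1, hz⟩
end

section
/- Let F, G : [0,1] → OC_n be continuous paths with F(0) = G(0) and F(1) = G(1). If there exists a finite sequence of arrangement cells (A_1,…,A_r) that covers both F and G, then F and G are homotopic relative to their endpoints through paths in OC_n: there exists a continuous H : [0,1]×[0,1] → OC_n with H(0,t) = F(t), H(1,t) = G(t), H(s,0) = F(0), and H(s,1) = F(1) for all s, t. -/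
/-- A finite sequence of sets covers a path `F` (on the time interval `[0,1]`)
if there is a partition `0 = t₀ ≤ t₁ ≤ … ≤ t_r = 1` with `F([t_{i-1}, t_i]) ⊆ A i`. -/
def Covers {n r : ℕ} (A : Fin r → Set (Fin n → ℂ)) (F : ℝ → (Fin n → ℂ)) : Prop :=
  ∃ t : Fin (r + 1) → ℝ, Monotone t ∧ t 0 = 0 ∧ t (Fin.last r) = 1 ∧
    ∀ i : Fin r, F '' Set.Icc (t i.castSucc) (t i.succ) ⊆ A i

/-!
Reparametrize `F` and `G` piecewise linearly so that both run through the cell `A k` during the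
same time interval `[k / r, (k + 1) / r]`. Each path is homotopic to its reparametrization, and
the two reparametrized paths are joined by the straight-line homotopy, which stays in `OC n`
because an arrangement cell is convex and consists of configurations.
-/

open Set Finset unitInterval

namespace Path

variable {X : Type*} [TopologicalSpace X]

def ofMapsTo {S : Set X} {f : ℝ → X} (hf : ContinuousOn f I) (hS : MapsTo f I S) {x y : S}
    (h₀ : f 0 = x) (h₁ : f 1 = y) : Path x y where
  toFun := hS.restrict f I S
  continuous_toFun := hf.mapsToRestrict hS
  source' := Subtype.ext h₀
  target' := Subtype.ext h₁

@[simp]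
theorem coe_ofMapsTo_apply {S : Set X} {f : ℝ → X} (hf : ContinuousOn f I) (hS : MapsTo f I S)
    {x y : S} (h₀ : f 0 = x) (h₁ : f 1 = y) (t : I) : (ofMapsTo hf hS h₀ h₁ t : X) = f t := rfl

theorem Homotopic.exists_homotopy_ofMapsTo {S : Set X} {f g : ℝ → X} {hf : ContinuousOn f I}
    {hfS : MapsTo f I S} {hg : ContinuousOn g I} {hgS : MapsTo g I S} {x y : S}
    {hf₀ : f 0 = x} {hf₁ : f 1 = y} {hg₀ : g 0 = x} {hg₁ : g 1 = y}
    (h : (ofMapsTo hf hfS hf₀ hf₁).Homotopic (ofMapsTo hg hgS hg₀ hg₁)) :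
    ∃ H : ℝ → ℝ → X, ContinuousOn (fun p : ℝ × ℝ => H p.1 p.2) (I ×ˢ I) ∧
      (∀ s ∈ I, ∀ t ∈ I, H s t ∈ S) ∧ (∀ t ∈ I, H 0 t = f t) ∧ (∀ t ∈ I, H 1 t = g t) ∧
      (∀ s ∈ I, H s 0 = x ∧ H s 1 = y) := by
  obtain ⟨Φ⟩ := h
  refine ⟨fun s t => Φ (projIcc 0 1 zero_le_one s, projIcc 0 1 zero_le_one t), ?_, ?_, ?_, ?_, ?_⟩
  · exact (continuous_subtype_val.comp (Φ.continuous.comp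
      (continuous_projIcc.prodMap continuous_projIcc))).continuousOn
  · exact fun s _ t _ => Subtype.prop _
  · intro t ht
    simp [projIcc_of_mem _ ht]
  · intro t ht
    simp [projIcc_of_mem _ ht]
  · intro s _
    simp

variable {E : Type*} [AddCommGroup E] [Module ℝ E] [TopologicalSpace E] [IsTopologicalAddGroup E]
  [ContinuousSMul ℝ E]

theorem homotopic_of_segment_subset {S : Set E} {x y : S} {p q : Path x y}
    (h : ∀ t, segment ℝ (p t : E) (q t) ⊆ S) : p.Homotopic q :=
  ⟨{ toFun := fun st => ⟨Path.segment (p st.2 : E) (q st.2) st.1,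
        h st.2 (Path.range_segment (p st.2 : E) (q st.2) ▸ mem_range_self st.1)⟩
     continuous_toFun := by
       refine Continuous.subtype_mk ?_ _
       simp only [Path.segment_apply, AffineMap.lineMap_apply_module]
       fun_prop
     map_zero_left := by simp
     map_one_left := by simp
     prop' := by
       rintro s t (rfl | rfl) <;> simp }⟩

end Path

noncomputable def ramp (y : ℝ) : ℝ := max 0 (min 1 y)

theorem continuous_ramp : Continuous ramp := by unfold ramp; fun_prop

theorem ramp_mem_Icc (y : ℝ) : ramp y ∈ Icc (0 : ℝ) 1 :=
  ⟨le_max_left _ _, max_le zero_le_one (min_le_left _ _)⟩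

theorem ramp_of_nonpos {y : ℝ} (h : y ≤ 0) : ramp y = 0 :=
  max_eq_left ((min_le_right _ _).trans h)

theorem ramp_of_one_le {y : ℝ} (h : 1 ≤ y) : ramp y = 1 := by
  rw [ramp, min_eq_left h, max_eq_right zero_le_one]

section GridInterp

variable (r : ℕ) (s : ℕ → ℝ)

/-- The piecewise linear map with value `s k` at `k / r` for `k ≤ r`. -/
noncomputable def gridInterp (x : ℝ) : ℝ :=
  s 0 + ∑ i ∈ range r, (s (i + 1) - s i) * ramp (r * x - i)

theorem continuous_gridInterp : Continuous (gridInterp r s) := by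
  unfold gridInterp; have := continuous_ramp; fun_prop

theorem gridInterp_zero : gridInterp r s 0 = s 0 := by
  refine add_eq_left.2 (sum_eq_zero fun i _ => ?_)
  rw [ramp_of_nonpos (by simp), mul_zero]

theorem gridInterp_one : gridInterp r s 1 = s r := by
  rw [gridInterp, sum_congr rfl fun i hi => by
    have : (i : ℝ) + 1 ≤ r := by exact_mod_cast mem_range.1 hi
    rw [ramp_of_one_le (by linarith), mul_one],
    sum_range_sub]
  ring

variable {r s}

theorem gridInterp_eq {k : ℕ} (hk : k < r) {x : ℝ} (hx : r * x ∈ Icc (k : ℝ) (k + 1)) :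
    gridInterp r s x = s k + (s (k + 1) - s k) * ramp (r * x - k) := by
  have full : ∀ i ∈ range k, (s (i + 1) - s i) * ramp (r * x - i) = s (i + 1) - s i := by
    intro i hi
    have : (i : ℝ) + 1 ≤ k := by exact_mod_cast mem_range.1 hi
    rw [ramp_of_one_le (by linarith [hx.1]), mul_one]
  have empty : ∀ i ∈ Finset.Ico (k + 1) r, (s (i + 1) - s i) * ramp (r * x - i) = 0 := by
    intro i hi
    have : (k : ℝ) + 1 ≤ i := by exact_mod_cast (Finset.mem_Ico.1 hi).1
    rw [ramp_of_nonpos (by linarith [hx.2]), mul_zero]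
  rw [gridInterp, ← sum_range_add_sum_Ico _ hk, sum_range_succ, sum_congr rfl full,
    sum_eq_zero empty, sum_range_sub]
  ring

theorem gridInterp_mem_Icc (hs : Monotone s) {k : ℕ} (hk : k < r) {x : ℝ}
    (hx : r * x ∈ Icc (k : ℝ) (k + 1)) : gridInterp r s x ∈ Icc (s k) (s (k + 1)) := by
  rw [gridInterp_eq hk hx]
  have hsk : s k ≤ s (k + 1) := hs k.le_succ
  obtain ⟨h₀, h₁⟩ := ramp_mem_Icc (r * x - k)
  constructor <;> nlinarith

theorem exists_lt_nat_mul_mem_Icc (hr : 0 < r) {x : ℝ} (hx : x ∈ I) :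
    ∃ k < r, r * x ∈ Icc (k : ℝ) (k + 1) := by
  have hrx : 0 ≤ (r : ℝ) * x := mul_nonneg r.cast_nonneg hx.1
  by_cases hlt : (r : ℝ) * x < r
  · exact ⟨⌊(r : ℝ) * x⌋₊, (Nat.floor_lt hrx).2 hlt, Nat.floor_le hrx, (Nat.lt_floor_add_one _).le⟩
  · have : (r : ℝ) * x ≤ r := mul_le_of_le_one_right r.cast_nonneg hx.2
    obtain ⟨m, rfl⟩ : ∃ m, r = m + 1 := ⟨r - 1, by omega⟩
    refine ⟨m, by omega, ?_, ?_⟩ <;> push_cast at hlt this ⊢ <;> linarith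

theorem gridInterp_mapsTo (hs : Monotone s) (hr : 0 < r) :
    MapsTo (gridInterp r s) I (Icc (s 0) (s r)) := by
  intro x hx
  obtain ⟨k, hk, hkx⟩ := exists_lt_nat_mul_mem_Icc hr hx
  exact Icc_subset_Icc (hs k.zero_le) (hs hk) (gridInterp_mem_Icc hs hk hkx)

end GridInterp

section Cells

variable {n : ℕ}

theorem convex_cell (rRe rIm : Fin n → Fin n → Prop) : Convex ℝ (cell rRe rIm) := by
  intro z hz w hw a b ha hb hab
  have combo_lt : ∀ {x₁ x₂ y₁ y₂ : ℝ}, x₁ < x₂ → y₁ < y₂ → a * x₁ + b * y₁ < a * x₂ + b * y₂ := by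
    intro x₁ x₂ y₁ y₂ hx hy
    rcases ha.eq_or_lt with rfl | ha
    · rw [zero_add] at hab; subst hab; simpa
    · nlinarith
  exact ⟨fun i j h => by simpa using combo_lt (hz.1 i j h) (hw.1 i j h),
    fun i j h => by simpa using combo_lt (hz.2 i j h) (hw.2 i j h)⟩

theorem IsArrangement.cell_subset_OC {rRe rIm : Fin n → Fin n → Prop}
    (h : IsArrangement rRe rIm) : cell rRe rIm ⊆ OC n := by
  intro z ⟨hre, him⟩ i j hij
  by_contra hne
  rcases h.2.2.2.2 i j hne with hc | hc | hc | hc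
  · exact (hre i j hc).ne (congrArg Complex.re hij)
  · exact (hre j i hc).ne' (congrArg Complex.re hij)
  · exact (him i j hc).ne (congrArg Complex.im hij)
  · exact (him j i hc).ne' (congrArg Complex.im hij)

end Cells

namespace Covers

variable {n r : ℕ} {A : Fin r → Set (Fin n → ℂ)} {F : ℝ → Fin n → ℂ}

theorem pos (h : Covers A F) : 0 < r := by
  obtain ⟨t, -, ht₀, ht₁, -⟩ := h
  rcases r with _ | r
  · exact absurd (ht₀ ▸ ht₁) zero_ne_one
  · exact r.succ_pos

theorem exists_reparam (h : Covers A F) :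
    ∃ φ : Path (0 : I) 1, ∀ (k : Fin r) (x : I), r * (x : ℝ) ∈ Icc (k : ℝ) (k + 1) →
      F (φ x) ∈ A k := by
  have hr := h.pos
  obtain ⟨t, ht, ht₀, ht₁, hcov⟩ := h
  set s : ℕ → ℝ := fun m => t (Fin.clamp m r)
  have hs : Monotone s := fun a b hab => ht (by simp [Fin.le_def]; omega)
  have hs_castSucc : ∀ k : Fin r, s k = t k.castSucc := fun k => by
    simp only [s]; congr 1; ext; simp [k.isLt.le]
  have hs_succ : ∀ k : Fin r, s (k + 1) = t k.succ := fun k => by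
    simp only [s]; congr 1; ext; simp [k.isLt]
  have hs₀ : s 0 = 0 := ht₀
  have hs₁ : s r = 1 := by
    rw [← ht₁]; simp only [s]; congr 1; ext; simp
  have hmaps : MapsTo (gridInterp r s) I I := by
    simpa only [hs₀, hs₁] using gridInterp_mapsTo hs hr
  refine ⟨Path.ofMapsTo (continuous_gridInterp r s).continuousOn hmaps
    (by simp [gridInterp_zero, hs₀]) (by simp [gridInterp_one, hs₁]),
    fun k x hx => hcov k ⟨_, ?_, rfl⟩⟩
  simpa [hs_castSucc, hs_succ] using gridInterp_mem_Icc hs k.isLt hx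

end Covers

theorem homotopic_of_common_cover {n : ℕ} (F G : ℝ → (Fin n → ℂ))
    (hFc : ContinuousOn F (Set.Icc 0 1)) (hGc : ContinuousOn G (Set.Icc 0 1))
    (hFoc : ∀ t ∈ Set.Icc (0:ℝ) 1, F t ∈ OC n)
    (hGoc : ∀ t ∈ Set.Icc (0:ℝ) 1, G t ∈ OC n)
    (h0 : F 0 = G 0) (h1 : F 1 = G 1)
    (hcov : ∃ (r : ℕ) (A : Fin r → Set (Fin n → ℂ)),
      (∀ i, ∃ rRe rIm : Fin n → Fin n → Prop,
        IsArrangement rRe rIm ∧ A i = cell rRe rIm) ∧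
      Covers A F ∧ Covers A G) :
    ∃ H : ℝ → ℝ → (Fin n → ℂ),
      ContinuousOn (fun p : ℝ × ℝ => H p.1 p.2)
        (Set.Icc (0:ℝ) 1 ×ˢ Set.Icc (0:ℝ) 1) ∧
      (∀ s ∈ Set.Icc (0:ℝ) 1, ∀ t ∈ Set.Icc (0:ℝ) 1, H s t ∈ OC n) ∧
      (∀ t ∈ Set.Icc (0:ℝ) 1, H 0 t = F t) ∧
      (∀ t ∈ Set.Icc (0:ℝ) 1, H 1 t = G t) ∧
      (∀ s ∈ Set.Icc (0:ℝ) 1, H s 0 = F 0 ∧ H s 1 = F 1) := by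
  obtain ⟨r, A, hA, hF, hG⟩ := hcov
  obtain ⟨φ, hφ⟩ := hF.exists_reparam
  obtain ⟨ψ, hψ⟩ := hG.exists_reparam
  let γF : Path (⟨F 0, hFoc 0 zero_mem⟩ : OC n) ⟨F 1, hFoc 1 one_mem⟩ :=
    Path.ofMapsTo hFc hFoc rfl rfl
  let γG : Path (⟨F 0, hFoc 0 zero_mem⟩ : OC n) ⟨F 1, hFoc 1 one_mem⟩ :=
    Path.ofMapsTo hGc hGoc h0.symm h1.symm
  have straight : (γF.reparam φ φ.continuous φ.source φ.target).Homotopic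
      (γG.reparam ψ ψ.continuous ψ.source ψ.target) := by
    refine Path.homotopic_of_segment_subset fun t => ?_
    obtain ⟨k, hk, hkt⟩ := exists_lt_nat_mul_mem_Icc hF.pos t.2
    obtain ⟨rRe, rIm, harr, hAk⟩ := hA ⟨k, hk⟩
    have hFk := hφ ⟨k, hk⟩ t hkt
    have hGk := hψ ⟨k, hk⟩ t hkt
    rw [hAk] at hFk hGk
    exact ((convex_cell rRe rIm).segment_subset hFk hGk).trans harr.cell_subset_OC
  have reparamF : γF.Homotopic (γF.reparam φ φ.continuous φ.source φ.target) :=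
    ⟨.reparam γF φ φ.continuous φ.source φ.target⟩
  have reparamG : γG.Homotopic (γG.reparam ψ ψ.continuous ψ.source ψ.target) :=
    ⟨.reparam γG ψ ψ.continuous ψ.source ψ.target⟩
  exact (reparamF.trans (straight.trans reparamG.symm)).exists_homotopy_ofMapsTo
end

section
/- For any permutations π, φ of {1,…,n}, the piecewise linear loop that goes from q(π) to p(π, φ) in a straight line, then from p(π, φ) to p(π, id) in a straight line, then from p(π, id) back to q(π) in a straight line, lies entirely in OC_n and is null-homotopic: it is homotopic, relative to its endpoints, to the constant path at q(π) through paths in OC_n. -/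
/-- The point `q(π) = (π(1), …, π(n))`, with values in `{1, …, n}`. -/
noncomputable def qPoint {n : ℕ} (π : Equiv.Perm (Fin n)) : Fin n → ℂ :=
  fun k => (((π k : ℕ) + 1 : ℝ) : ℂ)

/-- Straight-line segment from `a` to `b`, parametrized on `[0,1]`. -/
noncomputable def seg {n : ℕ} (a b : Fin n → ℂ) (t : ℝ) : Fin n → ℂ :=
  fun k => ((1 - t : ℝ) : ℂ) * a k + (t : ℂ) * b k

/-- The piecewise linear loop `q(π) → p(π, φ) → p(π, id) → q(π)`. -/
noncomputable def triLoop {n : ℕ} (π φ : Equiv.Perm (Fin n)) (t : ℝ) : Fin n → ℂ :=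
  if t ≤ 1/3 then seg (qPoint π) (permPoint π φ) (3 * t)
  else if t ≤ 2/3 then seg (permPoint π φ) (permPoint π 1) (3 * t - 1)
  else seg (permPoint π 1) (qPoint π) (3 * t - 2)

/-!
Every vertex of the triangle, hence every point of the loop, has `k`-th real part `π(k) + 1`.
Straight-line interpolation preserves this, so the straight-line contraction of the loop onto
`q(π)` keeps the real parts of the coordinates pairwise distinct, and stays in `OC_n`.
-/

open Complex

variable {n : ℕ}

lemma mem_OC_of_injective_re {z : Fin n → ℂ} (h : Function.Injective fun k => (z k).re) :
    z ∈ OC n :=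
  Function.Injective.of_comp (f := re) h

lemma mem_OC_of_re_eq_perm (π : Equiv.Perm (Fin n)) {z : Fin n → ℂ}
    (h : ∀ k, (z k).re = (π k : ℕ) + 1) : z ∈ OC n := by
  refine mem_OC_of_injective_re fun j k hjk => π.injective (Fin.val_injective ?_)
  simpa [h] using hjk

section Seg

variable (a b : Fin n → ℂ)

@[simp]
lemma seg_zero : seg a b 0 = a := by
  funext k; simp [seg]

@[simp]
lemma seg_one : seg a b 1 = b := by
  funext k; simp [seg]

@[simp]
lemma seg_self (t : ℝ) : seg a a t = a := by
  funext k; simp only [seg]; push_cast; ring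

lemma seg_apply_re (t : ℝ) (k : Fin n) :
    (seg a b t k).re = (1 - t) * (a k).re + t * (b k).re := by
  simp [seg]

variable {a b}

lemma seg_apply_re_of_re_eq {r : Fin n → ℝ} (ha : ∀ k, (a k).re = r k)
    (hb : ∀ k, (b k).re = r k) (t : ℝ) (k : Fin n) : (seg a b t k).re = r k := by
  rw [seg_apply_re, ha, hb]; ring

lemma Continuous.seg {X : Type*} [TopologicalSpace X] {a b : X → Fin n → ℂ} {t : X → ℝ}
    (ha : Continuous a) (hb : Continuous b) (ht : Continuous t) :
    Continuous fun x => _root_.seg (a x) (b x) (t x) := by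
  unfold _root_.seg; fun_prop

end Seg

section TriLoop

variable (π φ : Equiv.Perm (Fin n))

lemma qPoint_apply_re (k : Fin n) : (qPoint π k).re = (π k : ℕ) + 1 := by
  simp [qPoint]

lemma permPoint_apply_re (k : Fin n) : (permPoint π φ k).re = (π k : ℕ) + 1 := by
  simp [permPoint]

lemma triLoop_apply_re (t : ℝ) : ∀ k, (triLoop π φ t k).re = (π k : ℕ) + 1 := by
  have hq := qPoint_apply_re π
  have hp := permPoint_apply_re π
  unfold triLoop
  split_ifs
  · exact seg_apply_re_of_re_eq hq (hp φ) _
  · exact seg_apply_re_of_re_eq (hp φ) (hp 1) _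
  · exact seg_apply_re_of_re_eq (hp 1) hq _

lemma continuous_triLoop : Continuous (triLoop π φ) := by
  have h₁ : Continuous fun t : ℝ => seg (qPoint π) (permPoint π φ) (3 * t) :=
    continuous_const.seg continuous_const (by fun_prop)
  have h₂ : Continuous fun t : ℝ => seg (permPoint π φ) (permPoint π 1) (3 * t - 1) :=
    continuous_const.seg continuous_const (by fun_prop)
  have h₃ : Continuous fun t : ℝ => seg (permPoint π 1) (qPoint π) (3 * t - 2) :=
    continuous_const.seg continuous_const (by fun_prop)
  refine h₁.if_le (h₂.if_le h₃ continuous_id continuous_const ?_) continuous_id continuous_const ?_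
  all_goals rintro t rfl; norm_num

@[simp]
lemma triLoop_zero : triLoop π φ 0 = qPoint π := by
  norm_num [triLoop]

@[simp]
lemma triLoop_one : triLoop π φ 1 = qPoint π := by
  norm_num [triLoop]

end TriLoop

theorem triLoop_nullhomotopic {n : ℕ} (π φ : Equiv.Perm (Fin n)) :
    (∀ t ∈ Set.Icc (0:ℝ) 1, triLoop π φ t ∈ OC n) ∧
    ∃ H : ℝ → ℝ → (Fin n → ℂ),
      ContinuousOn (fun p : ℝ × ℝ => H p.1 p.2)
        (Set.Icc (0:ℝ) 1 ×ˢ Set.Icc (0:ℝ) 1) ∧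
      (∀ s ∈ Set.Icc (0:ℝ) 1, ∀ t ∈ Set.Icc (0:ℝ) 1, H s t ∈ OC n) ∧
      (∀ t ∈ Set.Icc (0:ℝ) 1, H 0 t = triLoop π φ t) ∧
      (∀ t ∈ Set.Icc (0:ℝ) 1, H 1 t = qPoint π) ∧
      (∀ s ∈ Set.Icc (0:ℝ) 1, H s 0 = qPoint π ∧ H s 1 = qPoint π) := by
  have hcont : Continuous fun p : ℝ × ℝ => seg (triLoop π φ p.2) (qPoint π) p.1 :=
    ((continuous_triLoop π φ).comp continuous_snd).seg continuous_const continuous_fst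
  refine ⟨fun t _ => mem_OC_of_re_eq_perm π (triLoop_apply_re π φ t),
    fun s t => seg (triLoop π φ t) (qPoint π) s, hcont.continuousOn,
    fun s _ t _ => mem_OC_of_re_eq_perm π
      (seg_apply_re_of_re_eq (triLoop_apply_re π φ t) (qPoint_apply_re π) s),
    fun t _ => seg_zero _ _, fun t _ => seg_one _ _, fun s _ => ?_⟩
  simp
end

section
/- Let r be a binary relation on a finite set V (the edge relation of a directed graph) whose transitive closure is irreflexive (the graph is acyclic), and let i, j ∈ V with r i j. Define the relation r' by: r' u v holds iff either (r u v and (u,v) ≠ (i,j)), or (u = i and r j v), or (v = j and r u i). Then for all u, v ∈ V with (u,v) ≠ (i,j), if v is reachable from u by the transitive closure of r, then v is reachable from u by the transitive closure of r'. -/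
open Relation

def edgeRewrite {α : Type*} (r : α → α → Prop) (i j : α) : α → α → Prop :=
  fun a b => (r a b ∧ (a, b) ≠ (i, j)) ∨ (a = i ∧ r j b) ∨ (b = j ∧ r a i)

section EdgeRewrite

variable {α : Type*} {r : α → α → Prop} {i j a b u v : α}

theorem edgeRewrite_of_rel_of_ne (h : r a b) (hne : (a, b) ≠ (i, j)) :
    edgeRewrite r i j a b :=
  Or.inl ⟨h, hne⟩

theorem edgeRewrite_shortcut_in (h : r a i) : edgeRewrite r i j a j :=
  Or.inr (Or.inr ⟨rfl, h⟩)

theorem edgeRewrite_shortcut_out (h : r j b) : edgeRewrite r i j i b :=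
  Or.inr (Or.inl ⟨rfl, h⟩)

theorem rel_of_edgeRewrite_of_not_rel (hji : ¬ r j i) (h : edgeRewrite r i j j b) : r j b := by
  rcases h with ⟨h, -⟩ | ⟨-, h⟩ | ⟨-, h⟩
  · exact h
  · exact h
  · exact absurd h hji

theorem transGen_edgeRewrite_src_of_tgt (hji : ¬ r j i)
    (h : TransGen (edgeRewrite r i j) j v) : TransGen (edgeRewrite r i j) i v := by
  obtain ⟨c, hjc, hcv⟩ := TransGen.head'_iff.mp h
  exact TransGen.head' (edgeRewrite_shortcut_out (rel_of_edgeRewrite_of_not_rel hji hjc)) hcv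

/-- An occurrence of `(i, j)` in an `r`-path is merged with the edge before it, or with the edge
after it when it comes first. -/
theorem eq_or_transGen_edgeRewrite_of_transGen (hji : ¬ r j i) (h : TransGen r u v) :
    (u = i ∧ v = j) ∨ TransGen (edgeRewrite r i j) u v := by
  induction h using TransGen.head_induction_on with
  | @single u h =>
    by_cases huv : (u, v) = (i, j)
    · exact Or.inl (Prod.ext_iff.mp huv)
    · exact Or.inr (TransGen.single (edgeRewrite_of_rel_of_ne h huv))
  | @head u b hub _ ih =>
    rcases ih with ⟨rfl, rfl⟩ | ih
    · exact Or.inr (TransGen.single (edgeRewrite_shortcut_in hub))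
    · by_cases hub' : (u, b) = (i, j)
      · obtain ⟨rfl, rfl⟩ := Prod.ext_iff.mp hub'
        exact Or.inr (transGen_edgeRewrite_src_of_tgt hji ih)
      · exact Or.inr (TransGen.head (edgeRewrite_of_rel_of_ne hub hub') ih)

end EdgeRewrite

theorem reachability_preserved_by_edge_rewrite_general {V : Type*}
    (r : V → V → Prop) (hacyc : ∀ v, ¬ Relation.TransGen r v v)
    (i j : V) (hij : r i j) :
    ∀ u v : V, (u, v) ≠ (i, j) → Relation.TransGen r u v →
      Relation.TransGen
        (fun a b => (r a b ∧ (a, b) ≠ (i, j)) ∨ (a = i ∧ r j b) ∨ (b = j ∧ r a i))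
        u v := by
  have hji : ¬ r j i := fun hji => hacyc i (TransGen.tail (TransGen.single hij) hji)
  intro u v huv h
  rcases eq_or_transGen_edgeRewrite_of_transGen hji h with ⟨rfl, rfl⟩ | h'
  · exact absurd rfl huv
  · exact h'

theorem reachability_preserved_by_edge_rewrite {V : Type*} [Finite V]
    (r : V → V → Prop) (hacyc : ∀ v, ¬ Relation.TransGen r v v)
    (i j : V) (hij : r i j) :
    ∀ u v : V, (u, v) ≠ (i, j) → Relation.TransGen r u v →
      Relation.TransGen
        (fun a b => (r a b ∧ (a, b) ≠ (i, j)) ∨ (a = i ∧ r j b) ∨ (b = j ∧ r a i))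
        u v :=
  reachability_preserved_by_edge_rewrite_general r hacyc i j hij
end
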